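/- The polynomial H(x,y,z) = x² + y² - (1/2)x³ - (1/2)x²y + 2x²z - (3/2)xz² - xy² + y²z - (1/2)yz² - (1/2)x³z + (5/4)x²z² + (1/2)x²y² - (3/2)xz³ + (1/2)y²z² - yz³ + xyz + (1/8)x⁴ - x²yz - xy²z + 2xyz² + (5/8)z⁴ is a first integral of the vector field X = (-v + h)∂/∂u + (u + h)∂/∂v + (-w + h)∂/∂w with h(u,v,w) = (1/4)u² - (1/2)v² - (5/4)w² + (1/2)uw + vw, i.e., XH ≡ 0 as polynomials in ℝ[u,v,w] (with (x,y,z) identified with (u,v,w)). -/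

import Mathlib

noncomputable def h0 (u v w : ℝ) : ℝ :=
  (1/4)*u^2 - (1/2)*v^2 - (5/4)*w^2 + (1/2)*u*w + v*w

noncomputable def H0 (x y z : ℝ) : ℝ :=
  x^2 + y^2 - (1/2)*x^3 - (1/2)*x^2*y + 2*x^2*z - (3/2)*x*z^2 - x*y^2 + y^2*z
  - (1/2)*y*z^2 - (1/2)*x^3*z + (5/4)*x^2*z^2 + (1/2)*x^2*y^2 - (3/2)*x*z^3
  + (1/2)*y^2*z^2 - y*z^3 + x*y*z + (1/8)*x^4 - x^2*y*z - x*y^2*z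
  + 2*x*y*z^2 + (5/8)*z^4

theorem deriv_H0_x (x y z : ℝ) :
    deriv (fun s => H0 s y z) x =
      2*x - (3/2)*x^2 - x*y + 4*x*z - (3/2)*z^2 - y^2 - (3/2)*x^2*z + (5/2)*x*z^2 + x*y^2
      - (3/2)*z^3 + y*z + (1/2)*x^3 - 2*x*y*z - y^2*z + 2*y*z^2 := by
  unfold H0
  simp (disch := fun_prop) only [deriv_fun_add, deriv_fun_sub, deriv_fun_mul, deriv_fun_pow,
    deriv_const', deriv_id'', deriv_const_mul_id']
  ring

theorem deriv_H0_y (x y z : ℝ) :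
    deriv (fun s => H0 x s z) y =
      2*y - (1/2)*x^2 - 2*x*y + 2*y*z - (1/2)*z^2 + x^2*y + y*z^2 - z^3 + x*z - x^2*z
      - 2*x*y*z + 2*x*z^2 := by
  unfold H0
  simp (disch := fun_prop) only [deriv_fun_add, deriv_fun_sub, deriv_fun_mul, deriv_fun_pow,
    deriv_const', deriv_id'', deriv_const_mul_id']
  ring

theorem deriv_H0_z (x y z : ℝ) :
    deriv (fun s => H0 x y s) z =
      2*x^2 - 3*x*z + y^2 - y*z - (1/2)*x^3 + (5/2)*x^2*z - (9/2)*x*z^2 + y^2*z - 3*y*z^2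
      + x*y - x^2*y - x*y^2 + 4*x*y*z + (5/2)*z^3 := by
  unfold H0
  simp (disch := fun_prop) only [deriv_fun_add, deriv_fun_sub, deriv_fun_mul, deriv_fun_pow,
    deriv_const', deriv_id'', deriv_const_mul_id']
  ring

/-- H is a first integral of X = (-v+h)∂u + (u+h)∂v + (-w+h)∂w. -/
theorem stmt_0 : ∀ u v w : ℝ,
    (-v + h0 u v w) * deriv (fun s => H0 s v w) u
    + (u + h0 u v w) * deriv (fun s => H0 u s w) v
    + (-w + h0 u v w) * deriv (fun s => H0 u v s) w = 0 := by
  intro u v w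
  rw [deriv_H0_x, deriv_H0_y, deriv_H0_z, h0]
  ring
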